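/- There exists a constant c > 0 such that for every L ≥ 1, every α ∈ (0,1] and every t ≥ 0, the birth-and-death chain with parameters L and α satisfies P^t(0,0) = P^t(L,L) and |P^t(0,0) − 1/2 − (1/2)·(1 − 2α/L)^t| ≤ c·L·α. -/

import Mathlib

open MeasureTheory Filter Topology

/-- Transition probabilities of the birth-and-death chain on `{0,…,L}` with parameter `α`:
`P(0,1) = P(L,L−1) = α`, `P(0,0) = P(L,L) = 1−α`, and `P(i,i+1) = P(i,i−1) = 1/2` for
`0 < i < L`. -/
noncomputable def bdKernel (L : ℕ) (α : ℝ) (i j : ℕ) : ℝ :=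
  if i = 0 then (if j = 1 then α else if j = 0 then 1 - α else 0)
  else if i = L then (if j = L - 1 then α else if j = L then 1 - α else 0)
  else if i < L then (if j = i + 1 ∨ j = i - 1 then 1 / 2 else 0)
  else 0

/-- `bdDist L α x t j = P^t(x, j)`, the probability that the birth-and-death chain started at
`x` is at state `j` at time `t`. -/
noncomputable def bdDist (L : ℕ) (α : ℝ) (x : ℕ) : ℕ → ℕ → ℝ
  | 0 => fun j => if j = x then 1 else 0
  | t + 1 => fun j => ∑ i ∈ Finset.range (L + 1), bdDist L α x t i * bdKernel L α i j

/-- Total variation distance between two distributions on the state space `{0,…,L}`. -/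
noncomputable def bdTV (L : ℕ) (μ ν : ℕ → ℝ) : ℝ :=
  ⨆ A : Set ℕ,
    |∑ i ∈ Finset.range (L + 1), Set.indicator A μ i -
      ∑ i ∈ Finset.range (L + 1), Set.indicator A ν i|

open Classical in
/-- `bdStay L α T x A = P(X_t ∈ A_t for all 0 ≤ t ≤ T | X_0 = x)` for the birth-and-death
chain with parameters `L` and `α`. -/
noncomputable def bdStay (L : ℕ) (α : ℝ) (T : ℕ) (x : ℕ) (A : ℕ → Set ℕ) : ℝ :=
  ∑ p : Fin (T + 1) → Fin (L + 1),
    if (p 0 : ℕ) = x ∧ ∀ t : Fin (T + 1), (p t : ℕ) ∈ A (t : ℕ) then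
      ∏ i : Fin T, bdKernel L α (p i.castSucc) (p i.succ) else 0

/-- The separation `S^A_T(0,L)` of a separating sequence `A` for the birth-and-death chain. -/
noncomputable def bdSep (L : ℕ) (α : ℝ) (T : ℕ) (A : ℕ → Set ℕ) : ℝ :=
  bdStay L α T 0 A + bdStay L α T L (fun t => (A t)ᶜ)

/-!
Put `β = 1 - 2α/L` and `f j = 1 - 2j/L`. The function `f` is harmonic at the interior states,
while `(P f) 0 = β f 0` and `(P f) L = β f L`; so the moment `M t = ∑ j, P^t(0,j) f j` obeys
`M (t+1) = M t - (2α/L) u t` with `u t = P^t(0,0) - P^t(0,L)`.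

Started at `0`, every interior state carries mass at most `2α` at all times: mass enters it
with probability `α` from an endpoint, or `1/2` from an interior neighbour. Hence the interior
carries mass at most `2αL`, which gives both `|M t - u t| ≤ 2αL` and
`P^t(0,0) + P^t(0,L) ≥ 1 - 2αL`. When `β ≥ 0`, the identity
`M (t+1) - β^(t+1) = β (M t - β^t) + (2α/L) (M t - u t)` is a convex combination of errors,
so `|M t - β^t| ≤ 2αL`, and solving for `P^t(0,0)` gives the estimate. When `β < 0` we have
`L < 2α`, so `Lα > 1/2` and the estimate is trivial. The equality `P^t(0,0) = P^t(L,L)` is the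
reflection symmetry `j ↦ L - j` of the chain.
-/

open Finset

lemma sum_range_succ_eq_add_add_sum_Ico {M : Type*} [AddCommMonoid M] (g : ℕ → M) {L : ℕ}
    (hL : 1 ≤ L) : ∑ j ∈ range (L + 1), g j = g 0 + g L + ∑ j ∈ Ico 1 L, g j := by
  rw [sum_range_succ, sum_range_eq_add_Ico g hL, add_right_comm]

lemma abs_one_sub_two_mul_div_le_one {x y : ℝ} (hx : 0 ≤ x) (hxy : x ≤ y) :
    |1 - 2 * x / y| ≤ 1 := by
  rcases hx.eq_or_lt with rfl | hx
  · simp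
  have : 2 * x / y ≤ 2 := by rw [div_le_iff₀ (hx.trans_le hxy)]; linarith
  have : 0 ≤ 2 * x / y := div_nonneg (by linarith) (by linarith)
  rw [abs_le]; constructor <;> linarith

section
variable {L : ℕ} {α : ℝ}

lemma bdKernel_nonneg (h0 : 0 ≤ α) (h1 : α ≤ 1) (i j : ℕ) : 0 ≤ bdKernel L α i j := by
  unfold bdKernel; split_ifs <;> linarith

lemma bdKernel_reflect {i j : ℕ} (hi : i ≤ L) (hj : j ≤ L) :
    bdKernel L α (L - i) (L - j) = bdKernel L α i j := by
  unfold bdKernel; split_ifs <;> first | rfl | omega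

lemma sum_bdKernel_mul (hL : 1 ≤ L) {i : ℕ} (hi : i ≤ L) (g : ℕ → ℝ) :
    ∑ j ∈ range (L + 1), bdKernel L α i j * g j =
      if i = 0 then α * g 1 + (1 - α) * g 0
      else if i = L then α * g (L - 1) + (1 - α) * g L
      else 1 / 2 * g (i + 1) + 1 / 2 * g (i - 1) := by
  split_ifs with h0 hiL
  · rw [sum_eq_add_of_mem 1 0 (by simp; omega) (by simp) one_ne_zero]
    · simp [bdKernel, h0]
    · intro j _ hj; simp [bdKernel, h0, hj.1, hj.2]
  · rw [sum_eq_add_of_mem (L - 1) L (by simp) (by simp) (by omega)]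
    · subst hiL
      simp [bdKernel, h0, show i ≠ i - 1 by omega]
    · intro j _ hj; simp [bdKernel, hiL, hj.1, hj.2]; omega
  · rw [sum_eq_add_of_mem (i + 1) (i - 1) (by simp; omega) (by simp; omega) (by omega)]
    · simp [bdKernel, h0, hiL, lt_of_le_of_ne hi hiL]
    · intro j _ hj; simp [bdKernel, h0, hiL, lt_of_le_of_ne hi hiL, hj.1, hj.2]

lemma sum_bdKernel (hL : 1 ≤ L) {i : ℕ} (hi : i ≤ L) :
    ∑ j ∈ range (L + 1), bdKernel L α i j = 1 := by
  simpa using (sum_bdKernel_mul (α := α) hL hi fun _ => 1).trans (by split_ifs <;> ring)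

lemma bdDist_succ (x t j : ℕ) :
    bdDist L α x (t + 1) j = ∑ i ∈ range (L + 1), bdDist L α x t i * bdKernel L α i j := rfl

lemma sum_bdDist_succ_mul (x t : ℕ) (g : ℕ → ℝ) :
    ∑ j ∈ range (L + 1), bdDist L α x (t + 1) j * g j =
      ∑ i ∈ range (L + 1), bdDist L α x t i * ∑ j ∈ range (L + 1), bdKernel L α i j * g j := by
  simp only [bdDist_succ, sum_mul, mul_sum, mul_assoc]
  exact sum_comm

lemma bdDist_nonneg (h0 : 0 ≤ α) (h1 : α ≤ 1) (x t j : ℕ) : 0 ≤ bdDist L α x t j := by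
  induction t generalizing j with
  | zero => simp only [bdDist]; split_ifs <;> norm_num
  | succ t ih => exact sum_nonneg fun i _ => mul_nonneg (ih i) (bdKernel_nonneg h0 h1 i j)

lemma sum_bdDist (hL : 1 ≤ L) {x : ℕ} (hx : x ≤ L) (t : ℕ) :
    ∑ j ∈ range (L + 1), bdDist L α x t j = 1 := by
  induction t with
  | zero => simp [bdDist, hx]
  | succ t ih =>
    calc ∑ j ∈ range (L + 1), bdDist L α x (t + 1) j
        = ∑ i ∈ range (L + 1), bdDist L α x t i * ∑ j ∈ range (L + 1), bdKernel L α i j := by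
          simpa using sum_bdDist_succ_mul x t fun _ => 1
      _ = ∑ i ∈ range (L + 1), bdDist L α x t i := sum_congr rfl fun i hi => by
          rw [sum_bdKernel hL (Nat.lt_succ_iff.mp (mem_range.mp hi)), mul_one]
      _ = 1 := ih

lemma bdDist_le_one (h0 : 0 ≤ α) (h1 : α ≤ 1) (hL : 1 ≤ L) {x : ℕ} (hx : x ≤ L) (t : ℕ)
    {j : ℕ} (hj : j ≤ L) : bdDist L α x t j ≤ 1 :=
  (sum_bdDist hL hx t).symm ▸
    single_le_sum (fun i _ => bdDist_nonneg h0 h1 x t i) (mem_range.mpr (Nat.lt_succ_of_le hj))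

lemma bdDist_reflect (t : ℕ) {j : ℕ} (hj : j ≤ L) :
    bdDist L α L t j = bdDist L α 0 t (L - j) := by
  induction t generalizing j with
  | zero => simp only [bdDist]; split_ifs <;> first | rfl | omega
  | succ t ih =>
    rw [bdDist_succ, bdDist_succ, ← sum_range_reflect, Nat.add_sub_cancel]
    refine sum_congr rfl fun i hi => ?_
    have hi : i ≤ L := Nat.lt_succ_iff.mp (mem_range.mp hi)
    rw [ih (Nat.sub_le L i), Nat.sub_sub_self hi, ← bdKernel_reflect hi (Nat.sub_le L j),
      Nat.sub_sub_self hj]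

lemma bdKernel_eq_zero_of_interior {i' i : ℕ} (hi0 : 0 < i) (hiL : i < L) (hl : i' ≠ i - 1)
    (hr : i' ≠ i + 1) : bdKernel L α i' i = 0 := by
  unfold bdKernel; split_ifs <;> first | rfl | omega

lemma bdKernel_le_of_endpoint (hα : 0 ≤ α) {i' i : ℕ} (hi' : i' = 0 ∨ i' = L) (hi0 : 0 < i)
    (hiL : i < L) : bdKernel L α i' i ≤ α := by
  unfold bdKernel; split_ifs <;> first | exact le_rfl | exact hα | omega

lemma bdKernel_le_half_of_interior {i' i : ℕ} (hi'0 : 0 < i') (hi'L : i' < L) :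
    bdKernel L α i' i ≤ 1 / 2 := by
  unfold bdKernel; split_ifs <;> first | omega | norm_num

lemma bdDist_zero_le_of_interior (h0 : 0 ≤ α) (h1 : α ≤ 1) (t : ℕ) {i : ℕ} (hi0 : 0 < i)
    (hiL : i < L) : bdDist L α 0 t i ≤ 2 * α := by
  induction t generalizing i with
  | zero => simp [bdDist, hi0.ne', h0]
  | succ t ih =>
    have term_le {i' : ℕ} (hi' : i' ≤ L) : bdDist L α 0 t i' * bdKernel L α i' i ≤ α := by
      by_cases hend : i' = 0 ∨ i' = L
      · calc _ ≤ 1 * α := mul_le_mul (bdDist_le_one h0 h1 (by omega) (Nat.zero_le L) t hi')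
              (bdKernel_le_of_endpoint h0 hend hi0 hiL) (bdKernel_nonneg h0 h1 i' i) zero_le_one
          _ = α := one_mul α
      · calc _ ≤ 2 * α * (1 / 2) := mul_le_mul (ih (by omega) (by omega))
              (bdKernel_le_half_of_interior (by omega) (by omega)) (bdKernel_nonneg h0 h1 i' i)
              (by positivity)
          _ = α := by ring
    rw [bdDist_succ, sum_eq_add_of_mem (i - 1) (i + 1) (by simp; omega) (by simp; omega)
      (by omega) fun i' _ hi' => by rw [bdKernel_eq_zero_of_interior hi0 hiL hi'.1 hi'.2, mul_zero]]
    linarith [term_le (i' := i - 1) (by omega), term_le (i' := i + 1) (by omega)]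

lemma sum_Ico_bdDist_zero_le (h0 : 0 ≤ α) (h1 : α ≤ 1) (t : ℕ) :
    ∑ j ∈ Ico 1 L, bdDist L α 0 t j ≤ 2 * α * L := by
  calc ∑ j ∈ Ico 1 L, bdDist L α 0 t j ≤ (Ico 1 L).card • (2 * α) :=
        sum_le_card_nsmul _ _ _ fun j hj =>
          bdDist_zero_le_of_interior h0 h1 t (mem_Ico.mp hj).1 (mem_Ico.mp hj).2
    _ ≤ 2 * α * L := by
        rw [Nat.card_Ico, nsmul_eq_mul, mul_comm]
        exact mul_le_mul_of_nonneg_left (Nat.cast_le.mpr (Nat.sub_le L 1)) (by positivity)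

end

noncomputable def bdMoment (L : ℕ) (α : ℝ) (x t : ℕ) : ℝ :=
  ∑ j ∈ range (L + 1), bdDist L α x t j * (1 - 2 * j / L)

section
variable {L : ℕ} {α : ℝ}

lemma sum_bdKernel_mul_linear (hL : 1 ≤ L) {i : ℕ} (hi : i ≤ L) :
    ∑ j ∈ range (L + 1), bdKernel L α i j * (1 - 2 * (j : ℝ) / L) =
      1 - 2 * (i : ℝ) / L - 2 * α / L * ((if i = 0 then 1 else 0) - if i = L then 1 else 0) := by
  have hL0 : (L : ℝ) ≠ 0 := by positivity
  rw [sum_bdKernel_mul hL hi]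
  split_ifs with h0 hiL h0' <;> subst_vars
  · omega
  · push_cast; field_simp; ring
  · push_cast [Nat.one_le_iff_ne_zero.mpr h0]; field_simp; ring
  · push_cast [Nat.one_le_iff_ne_zero.mpr h0]; field_simp; ring

lemma bdMoment_succ (hL : 1 ≤ L) (x t : ℕ) :
    bdMoment L α x (t + 1) =
      bdMoment L α x t - 2 * α / L * (bdDist L α x t 0 - bdDist L α x t L) := by
  rw [bdMoment, sum_bdDist_succ_mul]
  rw [sum_congr rfl fun i hi => by
    rw [sum_bdKernel_mul_linear hL (Nat.lt_succ_iff.mp (mem_range.mp hi))]]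
  simp only [mul_sub, mul_ite, mul_one, mul_zero, sum_sub_distrib, sum_ite_eq', mem_range,
    Nat.zero_lt_succ, Nat.lt_succ_self, if_true, bdMoment]
  ring

lemma bdMoment_zero_zero : bdMoment L α 0 0 = 1 := by
  simp [bdMoment, bdDist]

lemma abs_bdMoment_zero_sub_le (hL : 1 ≤ L) (h0 : 0 ≤ α) (h1 : α ≤ 1) (t : ℕ) :
    |bdMoment L α 0 t - (bdDist L α 0 t 0 - bdDist L α 0 t L)| ≤ 2 * α * L := by
  have hL0 : (L : ℝ) ≠ 0 := by positivity
  have interior : bdMoment L α 0 t - (bdDist L α 0 t 0 - bdDist L α 0 t L) =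
      ∑ j ∈ Ico 1 L, bdDist L α 0 t j * (1 - 2 * j / L) := by
    rw [bdMoment, sum_range_succ_eq_add_add_sum_Ico _ hL]
    field_simp
    ring
  calc |bdMoment L α 0 t - (bdDist L α 0 t 0 - bdDist L α 0 t L)|
      ≤ ∑ j ∈ Ico 1 L, |bdDist L α 0 t j * (1 - 2 * j / L)| := interior ▸ abs_sum_le_sum_abs _ _
    _ ≤ ∑ j ∈ Ico 1 L, bdDist L α 0 t j := sum_le_sum fun j hj => by
        rw [abs_mul, abs_of_nonneg (bdDist_nonneg h0 h1 0 t j)]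
        exact mul_le_of_le_one_right (bdDist_nonneg h0 h1 0 t j)
          (abs_one_sub_two_mul_div_le_one (Nat.cast_nonneg j)
            (Nat.cast_le.mpr (mem_Ico.mp hj).2.le))
    _ ≤ 2 * α * L := sum_Ico_bdDist_zero_le h0 h1 t

lemma abs_bdMoment_zero_sub_pow_le (hL : 1 ≤ L) (h0 : 0 ≤ α) (h1 : α ≤ 1)
    (hβ : 0 ≤ 1 - 2 * α / L) (t : ℕ) :
    |bdMoment L α 0 t - (1 - 2 * α / L) ^ t| ≤ 2 * α * L := by
  induction t with
  | zero => simp [bdMoment_zero_zero]; positivity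
  | succ t ih =>
    have hc : 0 ≤ 2 * α / L := by positivity
    have split : bdMoment L α 0 (t + 1) - (1 - 2 * α / L) ^ (t + 1) =
        (1 - 2 * α / L) * (bdMoment L α 0 t - (1 - 2 * α / L) ^ t) +
          2 * α / L * (bdMoment L α 0 t - (bdDist L α 0 t 0 - bdDist L α 0 t L)) := by
      rw [bdMoment_succ hL, pow_succ]; ring
    calc |bdMoment L α 0 (t + 1) - (1 - 2 * α / L) ^ (t + 1)|
        ≤ (1 - 2 * α / L) * (2 * α * L) + 2 * α / L * (2 * α * L) := by
          rw [split]
          refine (abs_add_le _ _).trans (add_le_add ?_ ?_)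
          · rw [abs_mul, abs_of_nonneg hβ]
            exact mul_le_mul_of_nonneg_left ih hβ
          · rw [abs_mul, abs_of_nonneg hc]
            exact mul_le_mul_of_nonneg_left (abs_bdMoment_zero_sub_le hL h0 h1 t) hc
      _ = 2 * α * L := by ring

lemma abs_bdDist_zero_zero_sub_le (hL : 1 ≤ L) (h0 : 0 ≤ α) (h1 : α ≤ 1)
    (hβ : 0 ≤ 1 - 2 * α / L) (t : ℕ) :
    |bdDist L α 0 t 0 - 1 / 2 - 1 / 2 * (1 - 2 * α / L) ^ t| ≤ 3 * L * α := by
  have total := sum_range_succ_eq_add_add_sum_Ico (bdDist L α 0 t) hL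
  rw [sum_bdDist hL (Nat.zero_le L)] at total
  have interior_le := sum_Ico_bdDist_zero_le (L := L) h0 h1 t
  have interior_nonneg : 0 ≤ ∑ j ∈ Ico 1 L, bdDist L α 0 t j :=
    sum_nonneg fun j _ => bdDist_nonneg h0 h1 0 t j
  obtain ⟨moment_ge, moment_le⟩ := abs_le.mp (abs_bdMoment_zero_sub_le hL h0 h1 t)
  obtain ⟨pow_ge, pow_le⟩ := abs_le.mp (abs_bdMoment_zero_sub_pow_le hL h0 h1 hβ t)
  rw [abs_le]; constructor <;> linarith

lemma abs_bdDist_zero_zero_sub_le_one (hL : 1 ≤ L) (h0 : 0 ≤ α) (h1 : α ≤ 1) (t : ℕ) :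
    |bdDist L α 0 t 0 - 1 / 2 - 1 / 2 * (1 - 2 * α / L) ^ t| ≤ 1 := by
  have hβ : |1 - 2 * α / L| ≤ 1 :=
    abs_one_sub_two_mul_div_le_one h0 (h1.trans (Nat.one_le_cast.mpr hL))
  obtain ⟨pow_ge, pow_le⟩ := abs_le.mp ((abs_pow _ t).trans_le (pow_le_one₀ (abs_nonneg _) hβ))
  have dist_nonneg := bdDist_nonneg (L := L) h0 h1 0 t 0
  have dist_le := bdDist_le_one h0 h1 hL (Nat.zero_le L) t (Nat.zero_le L)
  rw [abs_le]; constructor <;> linarith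

end

/-- Part (b), first claim, of the key lemma: there is a universal constant `c > 0` with
`P^t(0,0) = P^t(L,L) = 1/2 + (1/2)(1 − 2α/L)^t + O(Lα)`. -/
theorem bdDist_endpoint_asymptotics :
    ∃ c : ℝ, 0 < c ∧ ∀ L : ℕ, 1 ≤ L → ∀ α : ℝ, α ∈ Set.Ioc (0 : ℝ) 1 → ∀ t : ℕ,
      bdDist L α 0 t 0 = bdDist L α L t L ∧
      |bdDist L α 0 t 0 - 1 / 2 - (1 / 2) * (1 - 2 * α / L) ^ t| ≤ c * L * α := by
  refine ⟨3, by norm_num, fun L hL α ⟨h0, h1⟩ t => ⟨?_, ?_⟩⟩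
  · simpa using (bdDist_reflect (α := α) t le_rfl).symm
  rcases le_or_gt 0 (1 - 2 * α / L) with hβ | hβ
  · exact abs_bdDist_zero_zero_sub_le hL h0.le h1 hβ t
  · have hL1 : (1 : ℝ) ≤ L := Nat.one_le_cast.mpr hL
    have hLα : L < 2 * α := by
      rw [sub_neg, one_lt_div (by positivity)] at hβ; exact hβ
    calc _ ≤ 1 := abs_bdDist_zero_zero_sub_le_one hL h0.le h1 t
      _ ≤ 3 * L * α := by nlinarith
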